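/- For every parameter h ∈ [1/2, 1], the diffusion coefficient of the modified lifted map M̂_h (obtained from the lifted Bernoulli shift by changing the gradient and chopping up its first branch) exists and equals 1/2: lim_{n→∞} (1/(2n)) ∫_0^1 (M̂_h^n(x) − x)² dx = 1/2. Thus the diffusion coefficient is unchanged from that of the lifted Bernoulli shift map on this parameter range despite the drastic alteration of the microscopic dynamics. -/

import Mathlib

open Filter

/-- The modified lifted map `M̂_h`, obtained from the lifted Bernoulli shift by
changing the gradient and chopping up its first branch. -/
noncomputable def liftMhat (h x : ℝ) : ℝ :=
  if Int.fract x < (1-h)/2 then (⌊x⌋ : ℝ) + (-2 * Int.fract x + 1)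
  else if Int.fract x < 1/2 then (⌊x⌋ : ℝ) + (-2 * Int.fract x + 2)
  else (⌊x⌋ : ℝ) + (2 * Int.fract x - 1 - h)

/-!
With `φ x = {x} - 1[h < {x}]` the displacement splits as
`M̂_h x - x = Δ x + (φ (M̂_h x) - φ x)`, where for `h ≥ 1/2` the increment `Δ` is `1` on
`[0, 1/2)` and `-1` on `[1/2, 1)` (mod 1). Each half of the circle is mapped affinely with
slope `±2` onto a full period, so Lebesgue measure is invariant and
`∫ ψ (M̂_h x) Δ x dx = 0` for every bounded periodic `ψ`. Writing the Birkhoff sum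
`S_{n+1} = Δ + S_n ∘ M̂_h`, these two facts give `∫ S_n² = n ∫ Δ² = n`, and the bounded
coboundary `φ ∘ M̂_hⁿ - φ` changes `∫ (M̂_hⁿ x - x)²` by only `O(√n)`.
-/

open MeasureTheory

/-- Bounded measurable functions on `ℝ/ℤ`, seen as `1`-periodic functions on `ℝ`. -/
structure IsCircleObservable (ψ : ℝ → ℝ) : Prop where
  measurable : Measurable ψ
  bdd : ∃ C, ∀ x, |ψ x| ≤ C
  periodic : Function.Periodic ψ 1

namespace IsCircleObservable

variable {ψ χ : ℝ → ℝ}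

lemma const (c : ℝ) : IsCircleObservable fun _ => c :=
  ⟨measurable_const, ⟨|c|, fun _ => le_rfl⟩, fun _ => rfl⟩

lemma add (hψ : IsCircleObservable ψ) (hχ : IsCircleObservable χ) :
    IsCircleObservable fun x => ψ x + χ x := by
  obtain ⟨C, hC⟩ := hψ.bdd
  obtain ⟨D, hD⟩ := hχ.bdd
  exact ⟨hψ.measurable.add hχ.measurable,
    ⟨C + D, fun x => (abs_add_le _ _).trans (add_le_add (hC x) (hD x))⟩,
    hψ.periodic.add hχ.periodic⟩

lemma sub (hψ : IsCircleObservable ψ) (hχ : IsCircleObservable χ) :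
    IsCircleObservable fun x => ψ x - χ x := by
  obtain ⟨C, hC⟩ := hψ.bdd
  obtain ⟨D, hD⟩ := hχ.bdd
  exact ⟨hψ.measurable.sub hχ.measurable,
    ⟨C + D, fun x => (abs_sub _ _).trans (add_le_add (hC x) (hD x))⟩,
    hψ.periodic.sub hχ.periodic⟩

lemma mul (hψ : IsCircleObservable ψ) (hχ : IsCircleObservable χ) :
    IsCircleObservable fun x => ψ x * χ x := by
  obtain ⟨C, hC⟩ := hψ.bdd
  obtain ⟨D, hD⟩ := hχ.bdd
  refine ⟨hψ.measurable.mul hχ.measurable, ⟨C * D, fun x => ?_⟩, hψ.periodic.mul hχ.periodic⟩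
  rw [abs_mul]
  exact mul_le_mul (hC x) (hD x) (abs_nonneg _) ((abs_nonneg _).trans (hC x))

lemma pow (hψ : IsCircleObservable ψ) (n : ℕ) : IsCircleObservable fun x => ψ x ^ n := by
  obtain ⟨C, hC⟩ := hψ.bdd
  refine ⟨hψ.measurable.pow_const n, ⟨C ^ n, fun x => ?_⟩, fun x => ?_⟩
  · rw [abs_pow]
    exact pow_le_pow_left₀ (abs_nonneg _) (hC x) n
  · simp only [hψ.periodic x]

lemma comp (hψ : IsCircleObservable ψ) {F : ℝ → ℝ} (hFm : Measurable F)
    (hF : ∀ x, F (x + 1) = F x + 1) : IsCircleObservable fun x => ψ (F x) := by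
  obtain ⟨C, hC⟩ := hψ.bdd
  exact ⟨hψ.measurable.comp hFm, ⟨C, fun x => hC (F x)⟩,
    fun x => by simp only [hF, hψ.periodic (F x)]⟩

lemma intervalIntegrable (hψ : IsCircleObservable ψ) (a b : ℝ) :
    IntervalIntegrable ψ volume a b := by
  obtain ⟨C, hC⟩ := hψ.bdd
  exact (intervalIntegrable_const (c := C)).mono_fun' hψ.measurable.aestronglyMeasurable
    (ae_of_all _ hC)

end IsCircleObservable

lemma iterate_add_one {F : ℝ → ℝ} (hF : ∀ x, F (x + 1) = F x + 1) (n : ℕ) (x : ℝ) :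
    F^[n] (x + 1) = F^[n] x + 1 :=
  Function.Commute.iterate_left (g := (· + 1)) hF n x

lemma isCircleObservable_birkhoffSum {F g : ℝ → ℝ} (hFm : Measurable F)
    (hF : ∀ x, F (x + 1) = F x + 1) (hg : IsCircleObservable g) (n : ℕ) :
    IsCircleObservable (birkhoffSum F g n) := by
  induction n with
  | zero => exact IsCircleObservable.const 0
  | succ n ih =>
    rw [show birkhoffSum F g (n + 1) = fun x => g x + birkhoffSum F g n (F x) from
      funext (birkhoffSum_succ' F g n)]
    exact hg.add (ih.comp hFm hF)

lemma integral_birkhoffSum_sq {F g : ℝ → ℝ} (hFm : Measurable F)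
    (hF : ∀ x, F (x + 1) = F x + 1) (hg : IsCircleObservable g)
    (hinv : ∀ ψ, IsCircleObservable ψ → ∫ x in (0:ℝ)..1, ψ (F x) = ∫ x in (0:ℝ)..1, ψ x)
    (hmart : ∀ ψ, IsCircleObservable ψ → ∫ x in (0:ℝ)..1, ψ (F x) * g x = 0) (n : ℕ) :
    ∫ x in (0:ℝ)..1, birkhoffSum F g n x ^ 2 = n * ∫ x in (0:ℝ)..1, g x ^ 2 := by
  induction n with
  | zero => simp
  | succ n ih =>
    set S := birkhoffSum F g n
    have hS := isCircleObservable_birkhoffSum hFm hF hg n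
    have hSF := hS.comp hFm hF
    have expand : ∀ x, birkhoffSum F g (n + 1) x ^ 2
        = (g x ^ 2 + 2 * (S (F x) * g x)) + S (F x) ^ 2 := fun x => by
      rw [birkhoffSum_succ']; ring
    have hinvS : ∫ x in (0:ℝ)..1, S (F x) ^ 2 = ∫ x in (0:ℝ)..1, S x ^ 2 := hinv _ (hS.pow 2)
    simp_rw [expand]
    rw [intervalIntegral.integral_add (((hg.pow 2).intervalIntegrable _ _).add
        (((hSF.mul hg).intervalIntegrable _ _).const_mul 2)) ((hSF.pow 2).intervalIntegrable _ _),
      intervalIntegral.integral_add ((hg.pow 2).intervalIntegrable _ _)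
        (((hSF.mul hg).intervalIntegrable _ _).const_mul 2),
      intervalIntegral.integral_const_mul, hmart _ hS, hinvS, ih]
    push_cast
    ring

lemma abs_sq_add_sub_sq_le {s r B t : ℝ} (hr : |r| ≤ B) (ht : 0 < t) :
    |(s + r) ^ 2 - s ^ 2| ≤ B * (s ^ 2 / t + t) + B ^ 2 := by
  have hB : 0 ≤ B := (abs_nonneg r).trans hr
  have hamgm : 2 * |s| ≤ s ^ 2 / t + t := by
    rw [div_add' _ _ _ ht.ne', le_div_iff₀ ht]
    nlinarith [sq_nonneg (|s| - t), sq_abs s]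
  calc |(s + r) ^ 2 - s ^ 2| = |2 * s * r + r ^ 2| := by ring_nf
    _ ≤ |r| * (2 * |s|) + |r| ^ 2 := by
        refine (abs_add_le _ _).trans (le_of_eq ?_)
        rw [abs_mul, abs_mul, abs_two, abs_pow]; ring
    _ ≤ B * (s ^ 2 / t + t) + B ^ 2 := by
        gcongr

lemma abs_integral_sq_add_sub_le {s r : ℝ → ℝ} {B t : ℝ}
    (hs : IntervalIntegrable (fun x => s x ^ 2) volume 0 1)
    (hsr : IntervalIntegrable (fun x => (s x + r x) ^ 2) volume 0 1)
    (hr : ∀ x, |r x| ≤ B) (ht : 0 < t) :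
    |(∫ x in (0:ℝ)..1, (s x + r x) ^ 2) - ∫ x in (0:ℝ)..1, s x ^ 2|
      ≤ B * ((∫ x in (0:ℝ)..1, s x ^ 2) / t + t) + B ^ 2 := by
  have hbound : IntervalIntegrable (fun x => B * (s x ^ 2 / t + t) + B ^ 2) volume 0 1 :=
    ((hs.div_const t).add intervalIntegrable_const).const_mul B |>.add intervalIntegrable_const
  rw [← intervalIntegral.integral_sub hsr hs]
  refine (intervalIntegral.norm_integral_le_of_norm_le
    (f := fun x => (s x + r x) ^ 2 - s x ^ 2) zero_le_one
    (ae_of_all _ fun x _ => (abs_sq_add_sub_sq_le (s := s x) (hr x) ht : _)) hbound).trans_eq ?_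
  rw [intervalIntegral.integral_add (((hs.div_const t).add intervalIntegrable_const).const_mul B)
      intervalIntegrable_const, intervalIntegral.integral_const_mul,
    intervalIntegral.integral_add (hs.div_const t) intervalIntegrable_const,
    intervalIntegral.integral_div]
  simp

lemma tendsto_div_natCast_of_abs_sub_le_sqrt {a : ℕ → ℝ} {L K : ℝ}
    (h : ∀ᶠ n : ℕ in atTop, |a n - n * L| ≤ K * √n) :
    Tendsto (fun n : ℕ => a n / n) atTop (nhds L) := by
  have hlim : Tendsto (fun n : ℕ => K / √n) atTop (nhds 0) :=
    tendsto_const_nhds.div_atTop (Real.tendsto_sqrt_atTop.comp tendsto_natCast_atTop_atTop)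
  refine tendsto_sub_nhds_zero_iff.1 (squeeze_zero_norm' ?_ hlim)
  filter_upwards [h, eventually_gt_atTop 0] with n hn hpos
  have hn0 : (0 : ℝ) < n := Nat.cast_pos.2 hpos
  rw [Real.norm_eq_abs, div_sub' hn0.ne', abs_div, abs_of_pos hn0, div_le_div_iff₀ hn0
    (Real.sqrt_pos.2 hn0)]
  calc |a n - n * L| * √n ≤ K * √n * √n := by gcongr
    _ = K * n := by rw [mul_assoc, Real.mul_self_sqrt hn0.le]

def correctedDisplacement (F φ : ℝ → ℝ) (x : ℝ) : ℝ := (F x - x) - (φ (F x) - φ x)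

section CorrectedDisplacement

variable {F φ : ℝ → ℝ}

lemma birkhoffSum_correctedDisplacement (n : ℕ) (x : ℝ) :
    birkhoffSum F (correctedDisplacement F φ) n x = (F^[n] x - x) - (φ (F^[n] x) - φ x) := by
  induction n with
  | zero => simp
  | succ n ih =>
    rw [birkhoffSum_succ, ih, correctedDisplacement, Function.iterate_succ_apply']
    ring

lemma isCircleObservable_correctedDisplacement (hFm : Measurable F)
    (hF : ∀ x, F (x + 1) = F x + 1) (hdisp : ∃ C, ∀ x, |F x - x| ≤ C) (hφ : IsCircleObservable φ) :
    IsCircleObservable (correctedDisplacement F φ) :=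
  have hdisp' : IsCircleObservable fun x => F x - x :=
    ⟨hFm.sub measurable_id, hdisp, fun x => by simp only [hF]; ring⟩
  hdisp'.sub ((hφ.comp hFm hF).sub hφ)

theorem tendsto_integral_iterate_sub_sq_div (hFm : Measurable F)
    (hF : ∀ x, F (x + 1) = F x + 1) (hdisp : ∃ C, ∀ x, |F x - x| ≤ C)
    (hφ : IsCircleObservable φ)
    (hinv : ∀ ψ, IsCircleObservable ψ → ∫ x in (0:ℝ)..1, ψ (F x) = ∫ x in (0:ℝ)..1, ψ x)
    (hmart : ∀ ψ, IsCircleObservable ψ →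
      ∫ x in (0:ℝ)..1, ψ (F x) * correctedDisplacement F φ x = 0) :
    Tendsto (fun n : ℕ => (∫ x in (0:ℝ)..1, (F^[n] x - x) ^ 2) / n) atTop
      (nhds (∫ x in (0:ℝ)..1, correctedDisplacement F φ x ^ 2)) := by
  set σsq := ∫ x in (0:ℝ)..1, correctedDisplacement F φ x ^ 2
  obtain ⟨C, hC⟩ := hφ.bdd
  have hg := isCircleObservable_correctedDisplacement hFm hF hdisp hφ
  refine tendsto_div_natCast_of_abs_sub_le_sqrt (K := 2 * C * (σsq + 1) + (2 * C) ^ 2) ?_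
  filter_upwards [eventually_ge_atTop 1] with n hn
  have hS := isCircleObservable_birkhoffSum hFm hF hg n
  have hR := (hφ.comp (hFm.iterate n) (iterate_add_one hF n)).sub hφ
  have hRC : ∀ x, |φ (F^[n] x) - φ x| ≤ 2 * C := fun x =>
    (abs_sub _ _).trans (by linarith [hC (F^[n] x), hC x])
  have hsplit : ∀ x, F^[n] x - x
      = birkhoffSum F (correctedDisplacement F φ) n x + (φ (F^[n] x) - φ x) := fun x => by
    rw [birkhoffSum_correctedDisplacement]; ring
  -- `t = √n` balances the two terms `B ∫ S_n² / t = B n σ² / t` and `B t` of the bound.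
  have ht1 : 1 ≤ √(n : ℝ) := Real.one_le_sqrt.2 (by exact_mod_cast hn)
  have key := abs_integral_sq_add_sub_le ((hS.pow 2).intervalIntegrable 0 1)
    ((hS.add hR).pow 2 |>.intervalIntegrable 0 1) hRC (zero_lt_one.trans_le ht1)
  rw [integral_birkhoffSum_sq hFm hF hg hinv hmart n] at key
  have hdiv : n * σsq / √(n : ℝ) = σsq * √(n : ℝ) := by
    rw [div_eq_iff (by positivity), mul_assoc, Real.mul_self_sqrt (by positivity), mul_comm]
  simp_rw [hsplit]
  refine key.trans ?_
  rw [hdiv]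
  nlinarith [sq_nonneg C]

end CorrectedDisplacement

section LiftMhat

variable {h : ℝ}

lemma liftMhat_add_one (h x : ℝ) : liftMhat h (x + 1) = liftMhat h x + 1 := by
  simp only [liftMhat, Int.fract_add_one, Int.floor_add_one]
  split_ifs <;> push_cast <;> ring

lemma measurable_liftMhat (h : ℝ) : Measurable (liftMhat h) := by
  unfold liftMhat
  refine Measurable.ite (measurableSet_lt measurable_fract measurable_const) ?_
    (Measurable.ite (measurableSet_lt measurable_fract measurable_const) ?_ ?_) <;> fun_prop

lemma abs_liftMhat_sub_le (h x : ℝ) : |liftMhat h x - x| ≤ 2 + |h| := by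
  have hfloor : (⌊x⌋ : ℝ) = x - Int.fract x := (Int.self_sub_fract x).symm
  have := Int.fract_nonneg x
  have := Int.fract_lt_one x
  have := le_abs_self h
  have := neg_abs_le h
  unfold liftMhat
  rw [hfloor, abs_le]
  split_ifs <;> constructor <;> linarith

lemma liftMhat_of_mem_Ico {x : ℝ} (hx : x ∈ Set.Ico 0 1) :
    liftMhat h x = if x < (1 - h) / 2 then 1 - 2 * x else if x < 1 / 2 then 2 - 2 * x
      else 2 * x - 1 - h := by
  simp only [liftMhat, Int.fract_eq_self.2 hx, Int.floor_eq_zero_iff.2 hx, Int.cast_zero,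
    zero_add]
  split_ifs <;> ring

lemma integral_comp_liftMhat_zero_half {ψ : ℝ → ℝ} (hψ : Function.Periodic ψ 1) :
    ∫ x in (0:ℝ)..1/2, ψ (liftMhat h x) = 2⁻¹ * ∫ x in (0:ℝ)..1, ψ x := by
  rw [intervalIntegral.integral_congr_Ioo_of_le (g := fun x => ψ (-2 * x + 1)) (by norm_num)]
  · rw [intervalIntegral.integral_comp_mul_add _ (by norm_num), intervalIntegral.integral_symm]
    norm_num
  · intro x hx
    have hx' : x ∈ Set.Ico 0 1 := ⟨hx.1.le, by linarith [hx.2]⟩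
    simp only [liftMhat_of_mem_Ico hx', if_pos hx.2]
    split_ifs
    · ring_nf
    · rw [show 2 - 2 * x = -2 * x + 1 + 1 by ring, hψ]

lemma integral_comp_liftMhat_half_one (h0 : 0 ≤ h) {ψ : ℝ → ℝ} (hψ : Function.Periodic ψ 1) :
    ∫ x in (1/2:ℝ)..1, ψ (liftMhat h x) = 2⁻¹ * ∫ x in (0:ℝ)..1, ψ x := by
  rw [intervalIntegral.integral_congr_Ioo_of_le (g := fun x => ψ (2 * x + (-1 - h)))
    (by norm_num)]
  · rw [intervalIntegral.integral_comp_mul_add _ (by norm_num),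
      show 2 * (1 / 2 : ℝ) + (-1 - h) = -h by ring,
      show 2 * (1 : ℝ) + (-1 - h) = -h + 1 by ring, hψ.intervalIntegral_add_eq (-h) 0]
    norm_num
  · intro x hx
    have hx' : x ∈ Set.Ico 0 1 := ⟨by linarith [hx.1], hx.2⟩
    simp only [liftMhat_of_mem_Ico hx', if_neg (show ¬x < (1 - h) / 2 by linarith [hx.1]),
      if_neg (show ¬x < 1 / 2 by linarith [hx.1])]
    ring_nf

lemma integral_comp_liftMhat (h0 : 0 ≤ h) {ψ : ℝ → ℝ} (hψ : IsCircleObservable ψ) :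
    ∫ x in (0:ℝ)..1, ψ (liftMhat h x) = ∫ x in (0:ℝ)..1, ψ x := by
  have hi := (hψ.comp (measurable_liftMhat h) (liftMhat_add_one h)).intervalIntegrable
  rw [← intervalIntegral.integral_add_adjacent_intervals (hi 0 (1/2)) (hi (1/2) 1),
    integral_comp_liftMhat_zero_half hψ.periodic, integral_comp_liftMhat_half_one h0 hψ.periodic]
  ring

noncomputable def liftMhatCorrector (h x : ℝ) : ℝ :=
  Int.fract x - if h < Int.fract x then 1 else 0

lemma isCircleObservable_liftMhatCorrector (h : ℝ) :
    IsCircleObservable (liftMhatCorrector h) := by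
  refine ⟨measurable_fract.sub (Measurable.ite (measurableSet_lt measurable_const measurable_fract)
    measurable_const measurable_const), ⟨1, fun x => ?_⟩, fun x => ?_⟩
  · have := Int.fract_nonneg x
    have := Int.fract_lt_one x
    rw [liftMhatCorrector, abs_le]
    split_ifs <;> constructor <;> linarith
  · simp only [liftMhatCorrector, Int.fract_add_one]

lemma correctedDisplacement_liftMhat_of_mem_Ioo (hh : h ∈ Set.Icc (1/2 : ℝ) 1) {x : ℝ}
    (hx : x ∈ Set.Ioo 0 1) :
    correctedDisplacement (liftMhat h) (liftMhatCorrector h) x = if x < 1/2 then 1 else -1 := by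
  obtain ⟨hh1, hh2⟩ := hh
  obtain ⟨hx0, hx1⟩ := hx
  rw [correctedDisplacement, liftMhat_of_mem_Ico ⟨hx0.le, hx1⟩, liftMhatCorrector,
    liftMhatCorrector, Int.fract_eq_self.2 ⟨hx0.le, hx1⟩]
  rcases lt_or_ge x ((1 - h) / 2) with hc1 | hc1
  · have hfr : Int.fract (1 - 2 * x) = 1 - 2 * x :=
      Int.fract_eq_iff.2 ⟨by linarith, by linarith, 0, by simp⟩
    rw [if_pos hc1, hfr]
    split_ifs <;> linarith
  rcases lt_or_ge x (1 / 2) with hc2 | hc2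
  · have hfr : Int.fract (2 - 2 * x) = 1 - 2 * x :=
      Int.fract_eq_iff.2 ⟨by linarith, by linarith, 1, by push_cast; ring⟩
    rw [if_neg (not_lt.2 hc1), if_pos hc2, hfr]
    split_ifs <;> linarith
  rw [if_neg (not_lt.2 hc1), if_neg (not_lt.2 hc2)]
  rcases lt_or_ge x ((1 + h) / 2) with hc3 | hc3
  · have hfr : Int.fract (2 * x - 1 - h) = 2 * x - h :=
      Int.fract_eq_iff.2 ⟨by linarith, by linarith, -1, by push_cast; ring⟩
    rw [hfr]
    split_ifs <;> linarith
  · have hfr : Int.fract (2 * x - 1 - h) = 2 * x - 1 - h :=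
      Int.fract_eq_iff.2 ⟨by linarith, by linarith, 0, by simp⟩
    rw [hfr]
    split_ifs <;> linarith

lemma integral_comp_liftMhat_mul_correctedDisplacement (hh : h ∈ Set.Icc (1/2 : ℝ) 1)
    {ψ : ℝ → ℝ} (hψ : IsCircleObservable ψ) :
    ∫ x in (0:ℝ)..1,
      ψ (liftMhat h x) * correctedDisplacement (liftMhat h) (liftMhatCorrector h) x = 0 := by
  have hi := ((hψ.comp (measurable_liftMhat h) (liftMhat_add_one h)).mul
    (isCircleObservable_correctedDisplacement (measurable_liftMhat h) (liftMhat_add_one h)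
      ⟨_, abs_liftMhat_sub_le h⟩ (isCircleObservable_liftMhatCorrector h))).intervalIntegrable
  rw [← intervalIntegral.integral_add_adjacent_intervals (hi 0 (1/2)) (hi (1/2) 1),
    intervalIntegral.integral_congr_Ioo_of_le (g := fun x => ψ (liftMhat h x)) (by norm_num),
    intervalIntegral.integral_congr_Ioo_of_le (a := 1/2) (g := fun x => -ψ (liftMhat h x))
      (by norm_num), intervalIntegral.integral_neg, integral_comp_liftMhat_zero_half hψ.periodic,
    integral_comp_liftMhat_half_one (by linarith [hh.1]) hψ.periodic, add_neg_cancel]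
  · intro x hx
    simp only [correctedDisplacement_liftMhat_of_mem_Ioo hh ⟨by linarith [hx.1], hx.2⟩,
      if_neg (not_lt.2 hx.1.le), mul_neg_one]
  · intro x hx
    simp only [correctedDisplacement_liftMhat_of_mem_Ioo hh ⟨hx.1, by linarith [hx.2]⟩,
      if_pos hx.2, mul_one]

lemma integral_correctedDisplacement_liftMhat_sq (hh : h ∈ Set.Icc (1/2 : ℝ) 1) :
    ∫ x in (0:ℝ)..1, correctedDisplacement (liftMhat h) (liftMhatCorrector h) x ^ 2 = 1 := by
  rw [intervalIntegral.integral_congr_Ioo_of_le (g := fun _ => 1) zero_le_one]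
  · simp
  · intro x hx
    simp only [correctedDisplacement_liftMhat_of_mem_Ioo hh hx]
    split_ifs <;> norm_num

end LiftMhat

theorem stmt19 (h : ℝ) (hh : h ∈ Set.Icc (1/2:ℝ) 1) :
    Tendsto (fun n : ℕ => (1/(2*(n:ℝ))) * ∫ x in (0:ℝ)..1, ((liftMhat h)^[n] x - x)^2)
      atTop (nhds (1/2)) := by
  have hlim := tendsto_integral_iterate_sub_sq_div (measurable_liftMhat h) (liftMhat_add_one h)
    ⟨_, abs_liftMhat_sub_le h⟩ (isCircleObservable_liftMhatCorrector h)
    (fun _ hψ => integral_comp_liftMhat (by linarith [hh.1]) hψ)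
    (fun _ hψ => integral_comp_liftMhat_mul_correctedDisplacement hh hψ)
  rw [integral_correctedDisplacement_liftMhat_sq hh] at hlim
  convert hlim.div_const 2 using 2 with n
  ring
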